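/- arXiv:2105.03238 — 4 statements merged into one kernel-verified Lean document; each statement's English description precedes it below -/
import Mathlib

section
/- Suppose a sequence of nonnegative reals (J_k)_{k=1}^{n} satisfies J_k ≤ A·(k-1)/(n-1) + √γ · J_{k+1} for all 1 ≤ k ≤ n-1, where A ≥ 0 and 0 < γ < 1. Then for every 2 ≤ k ≤ n, J_k ≤ (A/(1-√γ)²)·(k-1)/(n-1) + γ^{(n-k)/2}·J_n. -/
theorem stmt_3 (n : ℕ) (hn : 3 ≤ n) (A γ : ℝ) (hA : 0 ≤ A) (hγ0 : 0 < γ) (hγ1 : γ < 1)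
    (J : ℕ → ℝ) (hJnonneg : ∀ k, 1 ≤ k → k ≤ n → 0 ≤ J k)
    (hrec : ∀ k, 1 ≤ k → k ≤ n - 1 →
      J k ≤ A * ((k : ℝ) - 1) / ((n : ℝ) - 1) + Real.sqrt γ * J (k + 1)) :
    ∀ k, 2 ≤ k → k ≤ n →
      J k ≤ (A / (1 - Real.sqrt γ) ^ 2) * ((k : ℝ) - 1) / ((n : ℝ) - 1)
        + (Real.sqrt γ) ^ (n - k) * J n := by
  set s := Real.sqrt γ with hs
  have hs0 : 0 < s := Real.sqrt_pos.mpr hγ0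
  have hs1 : s < 1 := by
    rw [hs]
    rw [show (1:ℝ) = Real.sqrt 1 by simp]
    exact Real.sqrt_lt_sqrt hγ0.le hγ1
  have h1s : 0 < 1 - s := by linarith
  have hn1 : (1:ℝ) < (n:ℝ) := by exact_mod_cast lt_of_lt_of_le (by norm_num) hn
  have hn0 : (0:ℝ) < (n:ℝ) - 1 := by linarith
  have key : ∀ d : ℕ, d ≤ n - 1 →
      J (n - d) ≤ (A/((n:ℝ)-1)) * ((((n - d : ℕ):ℝ) - 1)/(1-s) + s/(1-s)^2) + s ^ d * J n := by
    intro d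
    induction d with
    | zero =>
      intro _
      simp only [Nat.sub_zero, pow_zero, one_mul]
      have : 0 ≤ (A/((n:ℝ)-1)) * (((n:ℝ) - 1)/(1-s) + s/(1-s)^2) := by positivity
      linarith
    | succ d ih =>
      intro hd
      have hd' : d ≤ n - 1 := Nat.le_of_succ_le hd
      have hk1 : 1 ≤ n - (d+1) := by omega
      have hkn : n - (d+1) ≤ n - 1 := by omega
      have hstep := hrec (n - (d+1)) hk1 hkn
      have hkk : n - (d+1) + 1 = n - d := by omega
      rw [hkk] at hstep
      have ihd := ih hd'
      have hcast : ((n - (d+1) : ℕ):ℝ) = (n:ℝ) - ((d:ℝ)+1) := by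
        have h : d + 1 ≤ n := by omega
        push_cast [Nat.cast_sub h]
        ring
      have hcast2 : ((n - d : ℕ):ℝ) = (n:ℝ) - (d:ℝ) := by
        have h : d ≤ n := by omega
        push_cast [Nat.cast_sub h]
        ring
      rw [hcast]
      rw [hcast2] at ihd
      rw [hcast] at hstep
      have h2 : s * J (n - d) ≤
          s * ((A/((n:ℝ)-1)) * (((n:ℝ) - (d:ℝ) - 1)/(1-s) + s/(1-s)^2) + s ^ d * J n) :=
        mul_le_mul_of_nonneg_left ihd hs0.le
      have heq : A * ((n:ℝ) - ((d:ℝ)+1) - 1) / ((n:ℝ)-1)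
          + s * ((A/((n:ℝ)-1)) * (((n:ℝ) - (d:ℝ) - 1)/(1-s) + s/(1-s)^2))
          = (A/((n:ℝ)-1)) * (((n:ℝ) - ((d:ℝ)+1) - 1)/(1-s) + s/(1-s)^2) := by
        field_simp
        ring
      have hpow : s ^ (d+1) = s * s ^ d := by ring
      rw [hpow]
      linarith [hstep, h2, heq.le, heq.ge]
  intro k hk2 hkn
  have hd : n - k ≤ n - 1 := by omega
  have hkey := key (n - k) hd
  have hnn : n - (n - k) = k := by omega
  rw [hnn] at hkey
  have hk1 : (1:ℝ) ≤ (k:ℝ) - 1 := by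
    have : (2:ℝ) ≤ (k:ℝ) := by exact_mod_cast hk2
    linarith
  -- bound the constant: (k-1)/(1-s) + s/(1-s)^2 ≤ (k-1)/(1-s)^2
  have hbound : ((k:ℝ)-1)/(1-s) + s/(1-s)^2 ≤ ((k:ℝ)-1)/(1-s)^2 := by
    rw [div_add_div _ _ (ne_of_gt h1s) (ne_of_gt (by positivity : (0:ℝ) < (1-s)^2)),
      div_le_div_iff₀ (by positivity) (by positivity)]
    nlinarith [mul_nonneg (mul_nonneg (pow_nonneg h1s.le 3) hs0.le)
      (by linarith : (0:ℝ) ≤ (k:ℝ) - 2)]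
  have hbound2 : (A/((n:ℝ)-1)) * (((k:ℝ)-1)/(1-s) + s/(1-s)^2)
      ≤ (A/((n:ℝ)-1)) * (((k:ℝ)-1)/(1-s)^2) :=
    mul_le_mul_of_nonneg_left hbound (by positivity)
  have heq2 : (A/((n:ℝ)-1)) * (((k:ℝ)-1)/(1-s)^2)
      = (A / (1 - s) ^ 2) * ((k : ℝ) - 1) / ((n : ℝ) - 1) := by
    ring
  linarith [hkey, hbound2, heq2.le, heq2.ge]
end

section
/- Let α > 0 and let c_j = α·j/(1+α·j) for positive integers j. Then for all integers 1 ≤ k ≤ ℓ, the product ∏_{j=k}^{ℓ} c_j is at most ((1+αk)/(1+αℓ))^{1/α}. -/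
/-!
Take logarithms: `log c_j = log (1 - 1/(1+αj)) ≤ -1/(1+αj)`, and since
`log (1+α(j+1)) - log (1+αj) ≤ α/(1+αj)`, the sum of `1/(1+αj)` over `k ≤ j < ℓ` dominates the
telescoped `(1/α) log ((1+αℓ)/(1+αk))`, a discrete form of `∫_k^ℓ du/(1+αu)`.
-/

open Finset Real

lemma log_div_one_add_le {x : ℝ} (hx : 0 < x) : log (x / (1 + x)) ≤ -(1 + x)⁻¹ := by
  have h := log_le_sub_one_of_pos (show 0 < x / (1 + x) by positivity)
  rwa [show x / (1 + x) - 1 = -(1 + x)⁻¹ by field_simp; ring] at h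

lemma log_add_sub_log_le {a h : ℝ} (ha : 0 < a) (hah : 0 < a + h) :
    log (a + h) - log a ≤ h / a := by
  have key := log_le_sub_one_of_pos (div_pos hah ha)
  rwa [log_div hah.ne' ha.ne', show (a + h) / a - 1 = h / a by field_simp; ring] at key

lemma log_sub_log_le_mul_sum_inv {α : ℝ} (hα : 0 ≤ α) {k ℓ : ℕ} (hkl : k ≤ ℓ) :
    log (1 + α * ℓ) - log (1 + α * k) ≤ α * ∑ j ∈ Ico k ℓ, (1 + α * j)⁻¹ := by
  have hpos : ∀ j : ℕ, 0 < 1 + α * j := fun j => by positivity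
  rw [← sum_Ico_sub (fun j : ℕ => log (1 + α * j)) hkl, mul_sum]
  refine sum_le_sum fun j _ => ?_
  have step := log_add_sub_log_le (hpos j) (by simpa [mul_add, ← add_assoc] using hpos (j + 1))
  simpa [mul_add, ← add_assoc, div_eq_mul_inv] using step

theorem stmt_5 (α : ℝ) (hα : 0 < α) (k ℓ : ℕ) (hk : 1 ≤ k) (hkl : k ≤ ℓ) :
    ∏ j ∈ Finset.Icc k ℓ, (α * (j : ℝ) / (1 + α * (j : ℝ)))
      ≤ ((1 + α * (k : ℝ)) / (1 + α * (ℓ : ℝ))) ^ (1 / α) := by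
  have hden : ∀ j : ℕ, 0 < 1 + α * j := fun j => by positivity
  have hαj : ∀ j ∈ Icc k ℓ, 0 < α * j := fun j hj =>
    mul_pos hα (by exact_mod_cast hk.trans (mem_Icc.1 hj).1)
  have hc : ∀ j ∈ Icc k ℓ, 0 < α * j / (1 + α * j) := fun j hj =>
    div_pos (hαj j hj) (hden j)
  rw [le_rpow_iff_log_le (prod_pos hc) (div_pos (hden k) (hden ℓ)),
    log_prod fun j hj => (hc j hj).ne', log_div (hden k).ne' (hden ℓ).ne']
  calc ∑ j ∈ Icc k ℓ, log (α * j / (1 + α * j))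
      ≤ -∑ j ∈ Icc k ℓ, (1 + α * j)⁻¹ := by
        rw [← sum_neg_distrib]
        exact sum_le_sum fun j hj => log_div_one_add_le (hαj j hj)
    _ ≤ -∑ j ∈ Ico k ℓ, (1 + α * j)⁻¹ :=
        neg_le_neg (sum_le_sum_of_subset_of_nonneg Ico_subset_Icc_self
          fun j _ _ => (inv_pos.2 (hden j)).le)
    _ ≤ 1 / α * (log (1 + α * k) - log (1 + α * ℓ)) := by
        rw [one_div, ← neg_sub, mul_neg, neg_le_neg_iff, inv_mul_le_iff₀ hα]
        exact log_sub_log_le_mul_sum_inv hα.le hkl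
end

section
/- Fix a,b > 0 and integers n > k ≥ 1. Let P^n_k be the centered Gaussian on ℝ^k with covariance Σ_{n,k} = d_n(I_k + c_n J_k), where d_n = 1/(a + bn/(n-1)) and c_n = b/(a(n-1)), and let μ^{⊗k} be the centered Gaussian with covariance (a+b)^{-1} I_k. Then W_2²(P^n_k, μ^{⊗k}) = (k-1)(a+b)^{-1}(√(d_n(a+b)) - 1)² + (a+b)^{-1}(√(d_n(a+b)(1+k c_n)) - 1)². -/
open MeasureTheory

/-- Squared quadratic Wasserstein distance on `ℝ^k` (Euclidean cost),
defined as an infimum over couplings. -/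
noncomputable def W2sq {k : ℕ} (μ ν : Measure (Fin k → ℝ)) : ℝ :=
  sInf { r : ℝ | ∃ π : Measure ((Fin k → ℝ) × (Fin k → ℝ)),
    IsProbabilityMeasure π ∧ π.map Prod.fst = μ ∧ π.map Prod.snd = ν ∧
    r = ∫ p, ∑ i, (p.1 i - p.2 i) ^ 2 ∂π }

/-- Centered Gaussian measure on `ℝ^k` with covariance matrix `S`. -/
noncomputable def gaussianCov {k : ℕ} (S : Matrix (Fin k) (Fin k) ℝ) :
    Measure (Fin k → ℝ) :=
  volume.withDensity fun x =>
    ENNReal.ofReal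
      (Real.exp (-(dotProduct x (S⁻¹.mulVec x)) / 2)
        / Real.sqrt ((2 * Real.pi) ^ k * S.det))

/-!
Write the two covariances as squares `A * Aᵀ` and `B * Bᵀ` with `A = p • 1 + q • J` and
`B = c • 1`, where `p = √d_n`, `p + k q = √(d_n (1 + k c_n))` and `c = (a + b)^(-1/2)`. Both
Gaussians are images of the standard Gaussian under `A` and `B`, so the coupling `z ↦ (A z, B z)`
costs `tr ((A - B)ᵀ (A - B))`. Conversely, `M = A B⁻¹` is positive semidefinite, and expanding
`⟪N x - y, M (N x - y)⟫ ≥ 0` with `N = B A⁻¹` gives the pointwise bound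
`|x - y|² ≥ ⟪x, (1 - N) x⟫ + ⟪y, (1 - M) y⟫`, whose right side integrates against any coupling
to the same trace. The eigenvalues of `A - B` are `p - c` (multiplicity `k - 1`) and `p + k q - c`.
-/

open ProbabilityTheory Matrix
open scoped ENNReal

variable {ι : Type*} [Fintype ι] {k : ℕ}

lemma dotProduct_mulVec_eq_sum (M : Matrix ι ι ℝ) (x : ι → ℝ) :
    x ⬝ᵥ (M *ᵥ x) = ∑ i, ∑ j, M i j * (x i * x j) := by
  simp only [dotProduct, mulVec, Finset.mul_sum]
  exact Finset.sum_congr rfl fun i _ => Finset.sum_congr rfl fun j _ => by ring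

lemma dotProduct_mulVec_mulVec (A M : Matrix ι ι ℝ) (x : ι → ℝ) :
    (A *ᵥ x) ⬝ᵥ (M *ᵥ (A *ᵥ x)) = x ⬝ᵥ ((Aᵀ * M * A) *ᵥ x) := by
  rw [mulVec_mulVec, dotProduct_mulVec, ← vecMul_transpose, vecMul_vecMul, dotProduct_mulVec x,
    Matrix.mul_assoc]

lemma dotProduct_sub_mulVec_add_le_sum_sq_sub [DecidableEq ι] {M N : Matrix ι ι ℝ}
    (hM : M.PosSemidef) (hMN : M * N = 1) (x y : ι → ℝ) :
    x ⬝ᵥ ((1 - N) *ᵥ x) + y ⬝ᵥ ((1 - M) *ᵥ y) ≤ ∑ i, (x i - y i) ^ 2 := by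
  have hMt : Mᵀ = M := by simpa [conjTranspose_eq_transpose_of_trivial] using hM.isHermitian.eq
  have hnonneg := hM.dotProduct_mulVec_nonneg (N *ᵥ x - y)
  have h1 : (N *ᵥ x) ⬝ᵥ (M *ᵥ y) = x ⬝ᵥ y := by
    rw [dotProduct_mulVec, ← mulVec_transpose, hMt, mulVec_mulVec, hMN, one_mulVec,
      dotProduct_comm]
  have hsq : ∑ i, (x i - y i) ^ 2 = x ⬝ᵥ x - 2 * (x ⬝ᵥ y) + y ⬝ᵥ y := by
    simp only [dotProduct, Finset.mul_sum, ← Finset.sum_sub_distrib, ← Finset.sum_add_distrib]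
    exact Finset.sum_congr rfl fun i _ => by ring
  simp only [star_trivial, mulVec_sub, sub_mulVec, mulVec_mulVec, hMN, one_mulVec, dotProduct_sub,
    sub_dotProduct, h1] at hnonneg ⊢
  rw [hsq, dotProduct_comm (N *ᵥ x) x, dotProduct_comm y x] at *
  linarith

lemma MeasurableEquiv.map_withDensity {α β : Type*} [MeasurableSpace α] [MeasurableSpace β]
    (e : α ≃ᵐ β) (μ : Measure α) (g : α → ℝ≥0∞) :
    (μ.withDensity g).map e = (μ.map e).withDensity (g ∘ e.symm) := by
  ext s hs
  rw [e.map_apply, withDensity_apply _ (e.measurable hs), withDensity_apply _ hs, e.restrict_map,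
    lintegral_map_equiv]
  simp

lemma integral_add_integral_le_of_map_eq {α β : Type*} [MeasurableSpace α] [MeasurableSpace β]
    {π : Measure (α × β)} {μ : Measure α} {ν : Measure β}
    (hfst : π.map Prod.fst = μ) (hsnd : π.map Prod.snd = ν) {φ : α → ℝ} {ψ : β → ℝ}
    {c : α × β → ℝ} (hφ : Integrable φ μ) (hψ : Integrable ψ ν) (hc : Integrable c π)
    (h : ∀ x y, φ x + ψ y ≤ c (x, y)) :
    ∫ x, φ x ∂μ + ∫ y, ψ y ∂ν ≤ ∫ p, c p ∂π := by
  subst hfst hsnd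
  have hφ' : Integrable (fun p => φ p.1) π :=
    (integrable_map_measure hφ.1 measurable_fst.aemeasurable).mp hφ
  have hψ' : Integrable (fun p => ψ p.2) π :=
    (integrable_map_measure hψ.1 measurable_snd.aemeasurable).mp hψ
  rw [integral_map measurable_fst.aemeasurable hφ.1, integral_map measurable_snd.aemeasurable hψ.1,
    ← integral_add hφ' hψ']
  exact integral_mono (hφ'.add hψ') hc fun p => h p.1 p.2

lemma integrable_sum_sq_sub_of_map_eq {μ ν : Measure (ι → ℝ)} {π : Measure ((ι → ℝ) × (ι → ℝ))}
    (hfst : π.map Prod.fst = μ) (hsnd : π.map Prod.snd = ν)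
    (hμ : Integrable (fun x => x ⬝ᵥ x) μ) (hν : Integrable (fun y => y ⬝ᵥ y) ν) :
    Integrable (fun p => ∑ i, (p.1 i - p.2 i) ^ 2) π := by
  subst hfst hsnd
  have hμ' := (integrable_map_measure hμ.1 measurable_fst.aemeasurable).mp hμ
  have hν' := (integrable_map_measure hν.1 measurable_snd.aemeasurable).mp hν
  refine Integrable.mono' ((hμ'.const_mul 2).add (hν'.const_mul 2)) (by fun_prop)
    (Filter.Eventually.of_forall fun p => ?_)
  rw [Real.norm_of_nonneg (by positivity)]
  simp only [Pi.add_apply, Function.comp_apply, dotProduct, Finset.mul_sum,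
    ← Finset.sum_add_distrib]
  exact Finset.sum_le_sum fun i _ => by nlinarith [sq_nonneg (p.1 i + p.2 i)]

lemma memLp_two_eval_pi_gaussianReal (i : ι) :
    MemLp (fun x : ι → ℝ => x i) 2 (Measure.pi fun _ => gaussianReal 0 1) :=
  (memLp_id_gaussianReal 2).comp_measurePreserving (measurePreserving_eval _ i)

lemma integrable_eval_mul_eval_pi_gaussianReal (l m : ι) :
    Integrable (fun x : ι → ℝ => x l * x m) (Measure.pi fun _ => gaussianReal 0 1) :=
  (memLp_two_eval_pi_gaussianReal l).integrable_mul (memLp_two_eval_pi_gaussianReal m)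

lemma integrable_dotProduct_mulVec_pi_gaussianReal (M : Matrix ι ι ℝ) :
    Integrable (fun x => x ⬝ᵥ (M *ᵥ x)) (Measure.pi fun _ => gaussianReal 0 1) := by
  simp_rw [dotProduct_mulVec_eq_sum]
  exact integrable_finsetSum _ fun i _ => integrable_finsetSum _ fun j _ =>
    (integrable_eval_mul_eval_pi_gaussianReal i j).const_mul _

lemma integral_sq_gaussianReal (v : NNReal) : ∫ t, t ^ 2 ∂gaussianReal 0 v = v := by
  rw [← variance_of_integral_eq_zero aemeasurable_id' integral_id_gaussianReal,
    variance_fun_id_gaussianReal]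

lemma integral_eval_mul_eval_pi_gaussianReal [DecidableEq ι] (l m : ι) :
    ∫ x : ι → ℝ, x l * x m ∂(Measure.pi fun _ => gaussianReal 0 1) = if l = m then 1 else 0 := by
  split_ifs with hlm
  · subst hlm
    simp_rw [← sq]
    rw [integral_comp_eval (μ := fun _ : ι => gaussianReal 0 1) (f := fun t : ℝ => t ^ 2)
      (by fun_prop), integral_sq_gaussianReal, NNReal.coe_one]
  · have hind := (iIndepFun_pi (μ := fun _ : ι => gaussianReal 0 1) (X := fun _ => id)
      fun _ => aemeasurable_id).indepFun hlm
    have hmul := hind.integral_fun_mul_eq_mul_integral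
      (memLp_two_eval_pi_gaussianReal l).aestronglyMeasurable
      (memLp_two_eval_pi_gaussianReal m).aestronglyMeasurable
    simp only [id] at hmul
    simp [hmul, integral_eval, integral_id_gaussianReal]

lemma integral_dotProduct_mulVec_pi_gaussianReal [DecidableEq ι] (M : Matrix ι ι ℝ) :
    ∫ x, x ⬝ᵥ (M *ᵥ x) ∂(Measure.pi fun _ => gaussianReal 0 1) = M.trace := by
  have hint (i j : ι) := (integrable_eval_mul_eval_pi_gaussianReal i j).const_mul (M i j)
  simp_rw [dotProduct_mulVec_eq_sum]
  rw [integral_finsetSum _ fun i _ => integrable_finsetSum _ fun j _ => hint i j]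
  simp_rw [integral_finsetSum _ fun j _ => hint _ j, integral_const_mul,
    integral_eval_mul_eval_pi_gaussianReal, mul_ite, mul_one, mul_zero, Finset.sum_ite_eq,
    Finset.mem_univ, if_true, trace, diag]

lemma gaussianCov_one_density (x : Fin k → ℝ) :
    Real.exp (-(x ⬝ᵥ ((1 : Matrix (Fin k) (Fin k) ℝ)⁻¹ *ᵥ x)) / 2)
        / Real.sqrt ((2 * Real.pi) ^ k * (1 : Matrix (Fin k) (Fin k) ℝ).det)
      = ∏ i, gaussianPDFReal 0 1 (x i) := by
  have hsqrt : Real.sqrt ((2 * Real.pi) ^ k) = Real.sqrt (2 * Real.pi) ^ k := by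
    rw [Real.sqrt_eq_iff_eq_sq (by positivity) (by positivity), ← pow_mul, mul_comm k 2, pow_mul,
      Real.sq_sqrt (by positivity)]
  simp only [inv_one, one_mulVec, det_one, mul_one, gaussianPDFReal, NNReal.coe_one, sub_zero,
    Finset.prod_mul_distrib, Finset.prod_const, Finset.card_univ, Fintype.card_fin,
    ← Real.exp_sum, hsqrt, inv_pow, dotProduct, ← sq, neg_div, Finset.sum_div,
    Finset.sum_neg_distrib]
  rw [div_eq_inv_mul]

lemma gaussianCov_one_eq_pi :
    gaussianCov (1 : Matrix (Fin k) (Fin k) ℝ) = Measure.pi fun _ => gaussianReal 0 1 := by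
  symm
  refine Measure.pi_eq fun s hs => ?_
  have hint : ∀ i, Integrable ((s i).indicator (gaussianPDFReal 0 1)) :=
    fun i => (integrable_gaussianPDFReal 0 1).indicator (hs i)
  have hindicator : ∀ x : Fin k → ℝ, (Set.univ.pi s).indicator
      (fun x => ENNReal.ofReal (∏ i, gaussianPDFReal 0 1 (x i))) x
        = ENNReal.ofReal (∏ i, (s i).indicator (gaussianPDFReal 0 1) (x i)) := by
    intro x
    by_cases hx : x ∈ Set.univ.pi s
    · simp only [Set.indicator_of_mem hx]
      rw [Finset.prod_congr rfl fun i _ => Set.indicator_of_mem (hx i trivial) _]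
    · obtain ⟨i, hi⟩ : ∃ i, x i ∉ s i := by simpa [Set.mem_pi] using hx
      rw [Set.indicator_of_notMem hx, Finset.prod_eq_zero (Finset.mem_univ i)
        (Set.indicator_of_notMem hi _), ENNReal.ofReal_zero]
  rw [gaussianCov, withDensity_apply _ (MeasurableSet.univ_pi hs), ← lintegral_indicator
    (MeasurableSet.univ_pi hs)]
  simp_rw [gaussianCov_one_density, hindicator]
  rw [volume_pi, ← ofReal_integral_eq_lintegral_ofReal (Integrable.fintype_prod hint)
    (Filter.Eventually.of_forall fun x => Finset.prod_nonneg fun i _ =>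
      Set.indicator_nonneg (fun t _ => gaussianPDFReal_nonneg 0 1 t) _),
    integral_fintype_prod_eq_prod, ENNReal.ofReal_prod_of_nonneg
      fun i _ => integral_nonneg (Set.indicator_nonneg fun t _ => gaussianPDFReal_nonneg 0 1 t)]
  refine Finset.prod_congr rfl fun i _ => ?_
  rw [gaussianReal_apply_eq_integral 0 one_ne_zero, integral_indicator (hs i)]

instance : IsProbabilityMeasure (gaussianCov (1 : Matrix (Fin k) (Fin k) ℝ)) := by
  rw [gaussianCov_one_eq_pi]
  infer_instance

lemma map_mulVec_gaussianCov {A : Matrix (Fin k) (Fin k) ℝ} (hA : IsUnit A.det)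
    (S : Matrix (Fin k) (Fin k) ℝ) :
    (gaussianCov S).map (A *ᵥ ·) = gaussianCov (A * S * Aᵀ) := by
  let := A.invertibleOfIsUnitDet hA
  let e : (Fin k → ℝ) ≃ᵐ (Fin k → ℝ) :=
    (A.toLinearEquiv' ‹_›).toContinuousLinearEquiv.toHomeomorph.toMeasurableEquiv
  have he : ⇑e = (A *ᵥ ·) := rfl
  have he_symm : ⇑e.symm = (A⁻¹ *ᵥ ·) := by
    ext y : 1
    change toLin' (⅟A) y = _
    rw [invOf_eq_nonsing_inv, toLin'_apply]
  have hvol : (volume : Measure (Fin k → ℝ)).map e = ENNReal.ofReal |A.det⁻¹| • volume :=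
    Real.map_matrix_volume_pi_eq_smul_volume_pi hA.ne_zero
  rw [gaussianCov, ← he, e.map_withDensity, hvol, withDensity_smul_measure, gaussianCov,
    ← withDensity_smul' _ _ ENNReal.ofReal_ne_top, he_symm]
  congr 1
  ext y : 1
  have hquad : (A⁻¹ *ᵥ y) ⬝ᵥ (S⁻¹ *ᵥ (A⁻¹ *ᵥ y)) = y ⬝ᵥ ((A * S * Aᵀ)⁻¹ *ᵥ y) := by
    rw [dotProduct_mulVec_mulVec, Matrix.mul_inv_rev, Matrix.mul_inv_rev, transpose_nonsing_inv,
      Matrix.mul_assoc]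
  have hsqrt : Real.sqrt ((2 * Real.pi) ^ k * (A * S * Aᵀ).det)
      = |A.det| * Real.sqrt ((2 * Real.pi) ^ k * S.det) := by
    rw [det_mul, det_mul, det_transpose, ← Real.sqrt_sq_eq_abs, ← Real.sqrt_mul (sq_nonneg _)]
    congr 1
    ring
  simp only [Function.comp_apply, Pi.smul_apply, smul_eq_mul]
  rw [← ENNReal.ofReal_mul (abs_nonneg _), hquad, hsqrt, abs_inv]
  congr 1
  ring

section MulTranspose

variable {A : Matrix (Fin k) (Fin k) ℝ}

lemma gaussianCov_mul_transpose (hA : IsUnit A.det) :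
    gaussianCov (A * Aᵀ) = (gaussianCov 1).map (A *ᵥ ·) := by
  rw [map_mulVec_gaussianCov hA, Matrix.mul_one]

lemma integrable_dotProduct_mulVec_gaussianCov_mul_transpose (hA : IsUnit A.det)
    (Q : Matrix (Fin k) (Fin k) ℝ) :
    Integrable (fun x => x ⬝ᵥ (Q *ᵥ x)) (gaussianCov (A * Aᵀ)) := by
  rw [gaussianCov_mul_transpose hA, integrable_map_measure (by fun_prop) (by fun_prop)]
  simp only [Function.comp_def, dotProduct_mulVec_mulVec, gaussianCov_one_eq_pi]
  exact integrable_dotProduct_mulVec_pi_gaussianReal _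

lemma integral_dotProduct_mulVec_gaussianCov_mul_transpose (hA : IsUnit A.det)
    (Q : Matrix (Fin k) (Fin k) ℝ) :
    ∫ x, x ⬝ᵥ (Q *ᵥ x) ∂gaussianCov (A * Aᵀ) = (Aᵀ * Q * A).trace := by
  rw [gaussianCov_mul_transpose hA, integral_map (by fun_prop) (by fun_prop)]
  simp only [dotProduct_mulVec_mulVec, gaussianCov_one_eq_pi]
  exact integral_dotProduct_mulVec_pi_gaussianReal _

end MulTranspose

lemma integral_sum_sq_sub_map_mulVec_prod (A B : Matrix (Fin k) (Fin k) ℝ) :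
    ∫ p, ∑ i, (p.1 i - p.2 i) ^ 2 ∂(gaussianCov 1).map (fun z => (A *ᵥ z, B *ᵥ z))
      = ((A - B)ᵀ * (A - B)).trace := by
  rw [integral_map (by fun_prop) (by fun_prop)]
  have hcost (z : Fin k → ℝ) : ∑ i, ((A *ᵥ z) i - (B *ᵥ z) i) ^ 2
      = z ⬝ᵥ (((A - B)ᵀ * 1 * (A - B)) *ᵥ z) := by
    rw [← dotProduct_mulVec_mulVec, one_mulVec, sub_mulVec]
    simp only [dotProduct, Pi.sub_apply, sq]
  simp only [hcost, gaussianCov_one_eq_pi, integral_dotProduct_mulVec_pi_gaussianReal,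
    Matrix.mul_one]

section Wasserstein

variable {A B : Matrix (Fin k) (Fin k) ℝ}

lemma trace_le_integral_sum_sq_sub (hA : IsUnit A.det) (hB : IsUnit B.det)
    (hAB : (A * B⁻¹).PosSemidef) {π : Measure ((Fin k → ℝ) × (Fin k → ℝ))}
    (hfst : π.map Prod.fst = gaussianCov (A * Aᵀ)) (hsnd : π.map Prod.snd = gaussianCov (B * Bᵀ)) :
    ((A - B)ᵀ * (A - B)).trace ≤ ∫ p, ∑ i, (p.1 i - p.2 i) ^ 2 ∂π := by
  have hMN : A * B⁻¹ * (B * A⁻¹) = 1 := by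
    rw [Matrix.mul_assoc, ← Matrix.mul_assoc B⁻¹, nonsing_inv_mul _ hB, Matrix.one_mul,
      mul_nonsing_inv _ hA]
  have hsq (C : Matrix (Fin k) (Fin k) ℝ) (hC : IsUnit C.det) :
      Integrable (fun x => x ⬝ᵥ x) (gaussianCov (C * Cᵀ)) := by
    simpa using integrable_dotProduct_mulVec_gaussianCov_mul_transpose hC 1
  have key := integral_add_integral_le_of_map_eq hfst hsnd
    (integrable_dotProduct_mulVec_gaussianCov_mul_transpose hA (1 - B * A⁻¹))
    (integrable_dotProduct_mulVec_gaussianCov_mul_transpose hB (1 - A * B⁻¹))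
    (integrable_sum_sq_sub_of_map_eq hfst hsnd (hsq A hA) (hsq B hB))
    (dotProduct_sub_mulVec_add_le_sum_sq_sub hAB hMN)
  rw [integral_dotProduct_mulVec_gaussianCov_mul_transpose hA,
    integral_dotProduct_mulVec_gaussianCov_mul_transpose hB] at key
  convert key using 1
  have hA' : Aᵀ * (1 - B * A⁻¹) * A = Aᵀ * A - Aᵀ * B := by
    rw [Matrix.mul_sub, Matrix.sub_mul, Matrix.mul_one, Matrix.mul_assoc Aᵀ, Matrix.mul_assoc B,
      nonsing_inv_mul _ hA, Matrix.mul_one]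
  have hB' : Bᵀ * (1 - A * B⁻¹) * B = Bᵀ * B - Bᵀ * A := by
    rw [Matrix.mul_sub, Matrix.sub_mul, Matrix.mul_one, Matrix.mul_assoc Bᵀ, Matrix.mul_assoc A,
      nonsing_inv_mul _ hB, Matrix.mul_one]
  rw [hA', hB']
  simp only [transpose_sub, Matrix.sub_mul, Matrix.mul_sub, trace_sub]
  ring

theorem W2sq_gaussianCov_mul_transpose (hA : IsUnit A.det) (hB : IsUnit B.det)
    (hAB : (A * B⁻¹).PosSemidef) :
    W2sq (gaussianCov (A * Aᵀ)) (gaussianCov (B * Bᵀ)) = ((A - B)ᵀ * (A - B)).trace := by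
  refine IsLeast.csInf_eq ⟨⟨(gaussianCov 1).map fun z => (A *ᵥ z, B *ᵥ z),
    Measure.isProbabilityMeasure_map (by fun_prop), ?_, ?_,
    (integral_sum_sq_sub_map_mulVec_prod A B).symm⟩, ?_⟩
  · rw [Measure.map_map measurable_fst (by fun_prop), gaussianCov_mul_transpose hA]
    rfl
  · rw [Measure.map_map measurable_snd (by fun_prop), gaussianCov_mul_transpose hB]
    rfl
  · rintro r ⟨π, -, hfst, hsnd, rfl⟩
    exact trace_le_integral_sum_sq_sub hA hB hAB hfst hsnd

end Wasserstein

section ScalarAddAllOnes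

variable {n : Type*}

lemma transpose_smul_one_add_smul_of_one [DecidableEq n] (p q : ℝ) :
    (p • 1 + q • of fun _ _ => 1 : Matrix n n ℝ)ᵀ = p • 1 + q • of fun _ _ => 1 := by
  ext i j
  simp [one_apply, eq_comm]

variable [Fintype n]

lemma of_one_mul_of_one :
    (of fun _ _ => 1 : Matrix n n ℝ) * of (fun _ _ => 1)
      = (Fintype.card n : ℝ) • of fun _ _ => 1 := by
  ext i j
  simp [mul_apply]

lemma posSemidef_of_one : (of fun _ _ => 1 : Matrix n n ℝ).PosSemidef := by
  convert posSemidef_vecMulVec_self_star (fun _ : n => (1 : ℝ)) using 1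
  ext i j
  simp [vecMulVec_apply]

variable [DecidableEq n]

lemma smul_one_add_smul_of_one_mul (p q u v : ℝ) :
    (p • 1 + q • of fun _ _ => 1 : Matrix n n ℝ) * (u • 1 + v • of fun _ _ => 1)
      = (p * u) • 1 + (p * v + q * u + Fintype.card n * q * v) • of fun _ _ => 1 := by
  simp only [Matrix.add_mul, Matrix.mul_add, Matrix.smul_mul, Matrix.mul_smul, Matrix.one_mul,
    Matrix.mul_one, of_one_mul_of_one, smul_smul]
  module

lemma trace_smul_one_add_smul_of_one (p q : ℝ) :
    (p • 1 + q • of fun _ _ => 1 : Matrix n n ℝ).trace = Fintype.card n * (p + q) := by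
  simp [trace, one_apply, mul_add]

lemma posDef_smul_one_add_smul_of_one {p q : ℝ} (hp : 0 < p) (hq : 0 ≤ q) :
    (p • 1 + q • of fun _ _ => 1 : Matrix n n ℝ).PosDef :=
  (PosDef.one.smul hp).add_posSemidef (posSemidef_of_one.smul hq)

end ScalarAddAllOnes

lemma W2sq_gaussianCov_smul_one_add_smul_of_one_mul_transpose {p q c : ℝ} (hp : 0 < p)
    (hq : 0 ≤ q) (hc : 0 < c) :
    W2sq (gaussianCov ((p • 1 + q • of fun _ _ => 1) * (p • 1 + q • of fun _ _ => 1)ᵀ :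
          Matrix (Fin k) (Fin k) ℝ))
        (gaussianCov ((c • 1) * (c • 1)ᵀ))
      = (k - 1) * (p - c) ^ 2 + (p + k * q - c) ^ 2 := by
  set A : Matrix (Fin k) (Fin k) ℝ := p • 1 + q • of fun _ _ => 1
  set B : Matrix (Fin k) (Fin k) ℝ := c • 1
  have hA : A.PosDef := posDef_smul_one_add_smul_of_one hp hq
  have hB : B.PosDef := PosDef.one.smul hc
  have hAB : (A * B⁻¹).PosSemidef := by
    rw [inv_eq_right_inv (B := c⁻¹ • 1) (by simp [B, smul_smul, hc.ne']), Matrix.mul_smul,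
      Matrix.mul_one]
    exact hA.posSemidef.smul (by positivity)
  rw [W2sq_gaussianCov_mul_transpose (isUnit_iff_ne_zero.2 hA.det_pos.ne')
    (isUnit_iff_ne_zero.2 hB.det_pos.ne') hAB]
  have hsub : A - B = (p - c) • 1 + q • of fun _ _ => 1 := by
    simp only [A, B, sub_smul]
    abel
  rw [hsub, transpose_smul_one_add_smul_of_one, smul_one_add_smul_of_one_mul,
    trace_smul_one_add_smul_of_one, Fintype.card_fin]
  ring

lemma sqrt_add_mul_div_sqrt_add_sqrt {α β κ : ℝ} (hα : 0 < α) (hβ : 0 ≤ β) (hκ : 0 ≤ κ) :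
    √α + κ * (β / (√α + √(α + κ * β))) = √(α + κ * β) := by
  have hpos : 0 < √α + √(α + κ * β) := by positivity
  rw [mul_div_assoc', add_div' _ _ _ hpos.ne', div_eq_iff hpos.ne']
  linear_combination Real.mul_self_sqrt hα.le - Real.mul_self_sqrt (by positivity : 0 ≤ α + κ * β)

theorem W2sq_gaussianCov_smul_one_add_smul_of_one {α β γ : ℝ} (hα : 0 < α) (hβ : 0 ≤ β)
    (hγ : 0 < γ) :
    W2sq (gaussianCov (α • 1 + β • of fun _ _ => 1 : Matrix (Fin k) (Fin k) ℝ))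
        (gaussianCov (γ • 1))
      = (k - 1) * (√α - √γ) ^ 2 + (√(α + k * β) - √γ) ^ 2 := by
  -- `q` is `(√(α + k β) - √α) / k` in a form that needs no division by `k`
  have hpq := sqrt_add_mul_div_sqrt_add_sqrt hα hβ k.cast_nonneg
  set q := β / (√α + √(α + k * β))
  have hcovA : (α • 1 + β • of (fun _ _ => 1) : Matrix (Fin k) (Fin k) ℝ)
      = (√α • 1 + q • of fun _ _ => 1) * (√α • 1 + q • of fun _ _ => 1)ᵀ := by
    rw [transpose_smul_one_add_smul_of_one, smul_one_add_smul_of_one_mul, Fintype.card_fin,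
      Real.mul_self_sqrt hα.le]
    congr 2
    have hqsum : q * (√α + √(α + k * β)) = β := div_mul_cancel₀ β (by positivity)
    linear_combination -hqsum - q * hpq
  have hcovB : γ • 1 = (√γ • 1) * (√γ • 1 : Matrix (Fin k) (Fin k) ℝ)ᵀ := by
    rw [transpose_smul, transpose_one, smul_mul_smul_comm, Matrix.mul_one,
      Real.mul_self_sqrt hγ.le]
  rw [hcovA, hcovB, W2sq_gaussianCov_smul_one_add_smul_of_one_mul_transpose
    (Real.sqrt_pos.2 hα) (by positivity) (Real.sqrt_pos.2 hγ), hpq]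

theorem stmt_11_general (a b : ℝ) (ha : 0 < a) (hb : 0 < b) (n k : ℕ) (hkn : k < n) :
    let J : Matrix (Fin k) (Fin k) ℝ := Matrix.of fun _ _ => 1
    let dn : ℝ := 1 / (a + b * n / ((n : ℝ) - 1))
    let cn : ℝ := b / (a * ((n : ℝ) - 1))
    W2sq (gaussianCov (dn • ((1 : Matrix (Fin k) (Fin k) ℝ) + cn • J)))
         (gaussianCov ((a + b)⁻¹ • (1 : Matrix (Fin k) (Fin k) ℝ)))
      = ((k : ℝ) - 1) * (a + b)⁻¹ * (Real.sqrt (dn * (a + b)) - 1) ^ 2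
        + (a + b)⁻¹ * (Real.sqrt (dn * (a + b) * (1 + k * cn)) - 1) ^ 2 := by
  intro J dn cn
  have hn : 0 ≤ (n : ℝ) - 1 := sub_nonneg.2 (by exact_mod_cast Nat.one_le_of_lt hkn)
  have hdn : 0 < dn := one_div_pos.2 (add_pos_of_pos_of_nonneg ha (by positivity))
  have hcn : 0 ≤ cn := div_nonneg hb.le (mul_nonneg ha.le hn)
  have hab : 0 < a + b := add_pos ha hb
  have hrescale (x : ℝ) (hx : 0 ≤ x) :
      (√x - √(a + b)⁻¹) ^ 2 = (a + b)⁻¹ * (√(x * (a + b)) - 1) ^ 2 := by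
    rw [Real.sqrt_mul hx, Real.sqrt_inv]
    field_simp
    rw [Real.sq_sqrt hab.le]
  rw [smul_add, smul_smul, W2sq_gaussianCov_smul_one_add_smul_of_one hdn (mul_nonneg hdn.le hcn)
    (inv_pos.2 hab), hrescale dn hdn.le, show dn + k * (dn * cn) = dn * (1 + k * cn) by ring,
    hrescale _ (by positivity), mul_right_comm dn]
  ring

theorem stmt_11 (a b : ℝ) (ha : 0 < a) (hb : 0 < b) (n k : ℕ) (hk : 1 ≤ k)
    (hkn : k < n) :
    let J : Matrix (Fin k) (Fin k) ℝ := Matrix.of fun _ _ => 1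
    let dn : ℝ := 1 / (a + b * n / ((n : ℝ) - 1))
    let cn : ℝ := b / (a * ((n : ℝ) - 1))
    W2sq (gaussianCov (dn • ((1 : Matrix (Fin k) (Fin k) ℝ) + cn • J)))
         (gaussianCov ((a + b)⁻¹ • (1 : Matrix (Fin k) (Fin k) ℝ)))
      = ((k : ℝ) - 1) * (a + b)⁻¹ * (Real.sqrt (dn * (a + b)) - 1) ^ 2
        + (a + b)⁻¹ * (Real.sqrt (dn * (a + b) * (1 + k * cn)) - 1) ^ 2 :=
  stmt_11_general a b ha hb n k hkn
end

section
/- Let α > 1/2, ε > 0, γ, η, M > 0, and suppose nonnegative reals (H_k)_{k=1}^n satisfy H_k ≤ (η(1+1/ε) k(k-1)/(n-1)²)/(1+αk) + (αk/(1+αk)) H_{k+1} for 1 ≤ k < n, together with H_n ≤ ηM·n/(n-1) and ∏_{j=k}^{ℓ} αj/(1+αj) ≤ ((1+αk)/(1+αℓ))^{1/α}. Then for n > k ≥ 1 and n ≥ 2, H_k ≤ ((1+2α)²/((2α-1)αγε) + 2ηM)·((1+αk)/(1+α(n-1)))^{1/α}, where γ is related to the constants via a_ℓ/c_ℓ = (ℓ-1)/(γε(n-1)²)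 with a_k = η(1+1/ε)k(k-1)/((n-1)²(1+αk)) under the normalization η(1+1/ε)/α = 1/(γε) · (1+ε)/(1+ε), i.e., α = ηγ(1+ε). -/
/-!
With `c ℓ = α ℓ / (1 + α ℓ)` and `b ℓ = (ℓ - 1) / (γ ε (n - 1)²)`, the normalisation
`α = η γ (1 + ε)` turns the recursion into `H k ≤ c k * (b k + H (k + 1))`, which unrolls to
`H k ≤ ∑ ℓ, (∏_{j=k}^{ℓ} c j) b ℓ + (∏_{j=k}^{n-1} c j) H n`. The product bound makes the
`ℓ`-th term at most `(1 + α k)^(1/α) (1 + α ℓ)^(1 - 1/α) / (α γ ε (n - 1)²)`, and the sum of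
`(1 + α ℓ)^(1 - 1/α)` is at most `(1 + α n)^(2 - 1/α) / (2 α - 1)`, as for the integral.
Finally `1 + α n ≤ (1 + 2 α) (n - 1)` and `n / (n - 1) ≤ 2`.
-/

open Finset

theorem le_sum_prod_mul_add_prod_mul {R : Type*} [CommSemiring R] [PartialOrder R]
    [IsOrderedRing R] {H c b : ℕ → R} {k n : ℕ} (hc : ∀ j, 0 ≤ c j)
    (hrec : ∀ j, k ≤ j → j < n → H j ≤ c j * (b j + H (j + 1))) (hkn : k ≤ n) :
    H k ≤ ∑ ℓ ∈ Ico k n, (∏ j ∈ Icc k ℓ, c j) * b ℓ + (∏ j ∈ Ico k n, c j) * H n := by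
  induction hkn using Nat.decreasingInduction with
  | self => simp
  | of_succ k hkn ih =>
    have hsplit : ∀ ℓ, k ≤ ℓ → ∏ j ∈ Icc k ℓ, c j = c k * ∏ j ∈ Icc (k + 1) ℓ, c j := by
      intro ℓ hℓ
      rw [Icc_add_one_left_eq_Ioc, mul_prod_Ioc_eq_prod_Icc hℓ]
    calc H k ≤ c k * (b k + H (k + 1)) := hrec k le_rfl hkn
      _ ≤ c k * (b k + (∑ ℓ ∈ Ico (k + 1) n, (∏ j ∈ Icc (k + 1) ℓ, c j) * b ℓ
            + (∏ j ∈ Ico (k + 1) n, c j) * H n)) := by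
        gcongr
        · exact hc k
        · exact ih fun j hj => hrec j (by omega)
      _ = _ := by
        rw [sum_eq_sum_Ico_succ_bot hkn, prod_eq_prod_Ico_succ_bot hkn, hsplit k le_rfl,
          Icc_eq_empty (by omega), prod_empty, mul_one, mul_add, mul_add, mul_sum,
          ← add_assoc]
        congr 1
        · congr 1
          exact sum_congr rfl fun ℓ hℓ => by
            rw [hsplit ℓ (by simp only [mem_Ico] at hℓ; omega), mul_assoc]
        · ring

theorem Finset.sum_Ico_le_of_le_sub {M : Type*} [AddCommGroup M] [PartialOrder M]
    [IsOrderedAddMonoid M] {f g : ℕ → M} {k n : ℕ} (hkn : k ≤ n) (hf : 0 ≤ f k)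
    (h : ∀ ℓ ∈ Ico k n, g ℓ ≤ f (ℓ + 1) - f ℓ) : ∑ ℓ ∈ Ico k n, g ℓ ≤ f n :=
  ((sum_le_sum h).trans_eq (sum_Ico_sub f hkn)).trans (sub_le_self _ hf)

namespace Real

theorem mul_rpow_sub_one_mul_sub_le_rpow_sub_rpow {x y q : ℝ} (hx : 0 < x) (hy : 0 ≤ y)
    (hq : 1 ≤ q) : q * x ^ (q - 1) * (y - x) ≤ y ^ q - x ^ q := by
  have h := one_add_mul_self_le_rpow_one_add (s := y / x - 1)
    (by linarith [div_nonneg hy hx.le]) hq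
  rw [add_sub_cancel, div_rpow hy hx.le, le_div_iff₀ (rpow_pos_of_pos hx q)] at h
  calc q * x ^ (q - 1) * (y - x) = (1 + q * (y / x - 1)) * x ^ q - x ^ q := by
        rw [rpow_sub_one hx.ne']; field_simp; ring
    _ ≤ y ^ q - x ^ q := by linarith

theorem mul_rpow_sub_one_mul_sub_le_rpow_sub_rpow_of_le_one {x y q : ℝ} (hx : 0 ≤ x)
    (hy : 0 < y) (hq₀ : 0 ≤ q) (hq₁ : q ≤ 1) : q * y ^ (q - 1) * (y - x) ≤ y ^ q - x ^ q := by
  have h := rpow_one_add_le_one_add_mul_self (s := x / y - 1)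
    (by linarith [div_nonneg hx hy.le]) hq₀ hq₁
  rw [add_sub_cancel, div_rpow hx hy.le, div_le_iff₀ (rpow_pos_of_pos hy q)] at h
  calc q * y ^ (q - 1) * (y - x) = y ^ q - (1 + q * (x / y - 1)) * y ^ q := by
        rw [rpow_sub_one hy.ne']; field_simp; ring
    _ ≤ y ^ q - x ^ q := by linarith

end Real

open Real

/-- Each term is at most one step of a telescoping sum of `(1 + α ℓ) ^ q`, by the tangent-line
inequality for `t ↦ t ^ q`: at the left end of the step when `t ^ q` is convex (`1 ≤ q`), at the
right end, hence shifted by one index, when it is concave (`q ≤ 1`). -/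
theorem sum_Ico_mul_one_add_mul_rpow_sub_one_le {α q : ℝ} (hα : 0 < α) (hq : 0 < q) {k : ℕ}
    (hk : 1 ≤ k) (n : ℕ) :
    ∑ ℓ ∈ Ico k n, q * α * (1 + α * ℓ) ^ (q - 1) ≤ (1 + α * n) ^ q := by
  rcases lt_or_ge n k with hnk | hkn
  · rw [Ico_eq_empty_of_le hnk.le, sum_empty]
    positivity
  have hk' : (1 : ℝ) ≤ k := by exact_mod_cast hk
  rcases le_total 1 q with hq₁ | hq₁
  · refine sum_Ico_le_of_le_sub (f := fun ℓ : ℕ => (1 + α * ℓ) ^ q) hkn (by positivity)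
      fun ℓ _ => ?_
    have := mul_rpow_sub_one_mul_sub_le_rpow_sub_rpow (x := 1 + α * ℓ) (y := 1 + α * (ℓ + 1))
      (by positivity) (by positivity) hq₁
    push_cast
    linarith
  · have hsum := sum_Ico_le_of_le_sub (g := fun ℓ : ℕ => q * α * (1 + α * ℓ) ^ (q - 1))
      (f := fun ℓ : ℕ => (1 + α * (ℓ - 1)) ^ q) hkn (rpow_nonneg (by nlinarith) q)
      fun ℓ hℓ => by
        have hℓ' : (1 : ℝ) ≤ ℓ := by simp only [mem_Ico] at hℓ; exact_mod_cast hk.trans hℓ.1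
        have := mul_rpow_sub_one_mul_sub_le_rpow_sub_rpow_of_le_one (x := 1 + α * (ℓ - 1))
          (y := 1 + α * ℓ) (by nlinarith) (by positivity) hq.le hq₁
        push_cast
        ring_nf at this ⊢
        linarith
    have hn : (k : ℝ) ≤ n := by exact_mod_cast hkn
    exact hsum.trans (rpow_le_rpow (by nlinarith) (by linarith) hq.le)

theorem mul_sub_one_le_of_le_div_rpow {α x y P : ℝ} (hα : 0 < α) (hx : 0 ≤ x) (hy : 1 ≤ y)
    (hP : P ≤ ((1 + α * x) / (1 + α * y)) ^ (1 / α)) :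
    P * (y - 1) ≤ (1 + α * x) ^ (1 / α) / α * (1 + α * y) ^ (1 - 1 / α) := by
  have hy' : 0 < 1 + α * y := by positivity
  calc P * (y - 1) ≤ ((1 + α * x) / (1 + α * y)) ^ (1 / α) * ((1 + α * y) / α) := by
        refine mul_le_mul hP ?_ (by linarith) (by positivity)
        rw [le_div_iff₀ hα]
        linarith
    _ = (1 + α * x) ^ (1 / α) / α * (1 + α * y) ^ (1 - 1 / α) := by
        rw [div_rpow (by positivity) hy'.le, rpow_sub hy', rpow_one]
        field_simp

theorem one_add_mul_rpow_two_sub_le {α x : ℝ} (hα : 0 < α) (hx : 2 ≤ x) :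
    (1 + α * x) ^ (2 - 1 / α)
      ≤ (1 + 2 * α) ^ 2 * (x - 1) ^ 2 / (1 + α * (x - 1)) ^ (1 / α) := by
  have hsq : (1 + α * x) ^ 2 ≤ (1 + 2 * α) ^ 2 * (x - 1) ^ 2 := by
    rw [← mul_pow]
    exact pow_le_pow_left₀ (by positivity) (by nlinarith) 2
  rw [rpow_sub (by positivity), rpow_two]
  exact div_le_div₀ (by positivity) hsq (rpow_pos_of_pos (by nlinarith) _)
    (rpow_le_rpow (by nlinarith) (by linarith) (by positivity))

theorem sum_prod_mul_sub_one_le {α : ℝ} (hα : 1 / 2 < α) {c : ℕ → ℝ} {k n : ℕ} (hk : 1 ≤ k)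
    (hn : 2 ≤ n)
    (hprod : ∀ ℓ, k ≤ ℓ → ∏ j ∈ Icc k ℓ, c j ≤ ((1 + α * k) / (1 + α * ℓ)) ^ (1 / α)) :
    ∑ ℓ ∈ Ico k n, (∏ j ∈ Icc k ℓ, c j) * (ℓ - 1)
      ≤ (1 + 2 * α) ^ 2 / ((2 * α - 1) * α) * (n - 1) ^ 2
        * ((1 + α * k) / (1 + α * (n - 1))) ^ (1 / α) := by
  have hα₀ : 0 < α := by linarith
  have h2α : 0 < 2 * α - 1 := by linarith
  have hn' : (2 : ℝ) ≤ n := by exact_mod_cast hn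
  set q := 2 - 1 / α with hq
  have hqα : q * α = 2 * α - 1 := by rw [hq]; field_simp
  have hq₀ : 0 < q := by nlinarith
  set C := (1 + α * k) ^ (1 / α) / ((2 * α - 1) * α)
  calc ∑ ℓ ∈ Ico k n, (∏ j ∈ Icc k ℓ, c j) * (ℓ - 1)
      ≤ ∑ ℓ ∈ Ico k n, C * (q * α * (1 + α * ℓ) ^ (q - 1)) := by
        refine sum_le_sum fun ℓ hℓ => ?_
        simp only [mem_Ico] at hℓ
        refine (mul_sub_one_le_of_le_div_rpow hα₀ (Nat.cast_nonneg k)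
          (by exact_mod_cast hk.trans hℓ.1) (hprod ℓ hℓ.1)).trans_eq ?_
        rw [hqα, show q - 1 = 1 - 1 / α by ring]
        simp only [C]
        field_simp [(by linarith : 0 < α * 2 - 1).ne']
    _ = C * ∑ ℓ ∈ Ico k n, q * α * (1 + α * ℓ) ^ (q - 1) := (mul_sum ..).symm
    _ ≤ C * (1 + α * n) ^ q := by
        gcongr
        exact sum_Ico_mul_one_add_mul_rpow_sub_one_le hα₀ hq₀ hk n
    _ ≤ C * ((1 + 2 * α) ^ 2 * (n - 1) ^ 2 / (1 + α * (n - 1)) ^ (1 / α)) := by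
        gcongr
        exact one_add_mul_rpow_two_sub_le hα₀ hn'
    _ = _ := by
        rw [div_rpow (by positivity) (by nlinarith)]
        ring

theorem mul_div_sub_one_le_two_mul {a x : ℝ} (ha : 0 ≤ a) (hx : 2 ≤ x) :
    a * x / (x - 1) ≤ 2 * a := by
  rw [div_le_iff₀ (by linarith)]
  nlinarith

theorem stmt_16_general (α ε γ η M : ℝ) (hα : 1 / 2 < α) (hε : 0 < ε) (hγ : 0 < γ)
    (hη : 0 < η) (hM : 0 < M) (hnorm : α = η * γ * (1 + ε))
    (n : ℕ) (hn : 2 ≤ n) (H : ℕ → ℝ)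
    (hrec : ∀ k, 1 ≤ k → k < n →
      H k ≤ (η * (1 + 1 / ε) * (k : ℝ) * ((k : ℝ) - 1) / ((n : ℝ) - 1) ^ 2)
              / (1 + α * (k : ℝ))
            + (α * (k : ℝ) / (1 + α * (k : ℝ))) * H (k + 1))
    (hHn : H n ≤ η * M * (n : ℝ) / ((n : ℝ) - 1))
    (hprod : ∀ k ℓ : ℕ, 1 ≤ k → k ≤ ℓ →
      ∏ j ∈ Finset.Icc k ℓ, (α * (j : ℝ) / (1 + α * (j : ℝ)))
        ≤ ((1 + α * (k : ℝ)) / (1 + α * (ℓ : ℝ))) ^ (1 / α)) :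
    ∀ k, 1 ≤ k → k < n →
      H k ≤ ((1 + 2 * α) ^ 2 / ((2 * α - 1) * α * γ * ε) + 2 * η * M)
        * ((1 + α * (k : ℝ)) / (1 + α * ((n : ℝ) - 1))) ^ (1 / α) := by
  intro k hk hkn
  have hα₀ : 0 < α := by linarith
  have hn' : (2 : ℝ) ≤ n := by exact_mod_cast hn
  set c : ℕ → ℝ := fun j => α * j / (1 + α * j)
  set D := γ * ε * ((n : ℝ) - 1) ^ 2
  have hD : 0 < D := mul_pos (mul_pos hγ hε) (pow_pos (by linarith) 2)
  set r := ((1 + α * (k : ℝ)) / (1 + α * ((n : ℝ) - 1))) ^ (1 / α)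
  have hunroll : H k ≤ ∑ ℓ ∈ Ico k n, (∏ j ∈ Icc k ℓ, c j) * ((ℓ - 1) / D)
      + (∏ j ∈ Ico k n, c j) * H n := by
    refine le_sum_prod_mul_add_prod_mul (fun j => by positivity) (fun j hkj hjn => ?_) hkn.le
    refine (hrec j (hk.trans hkj) hjn).trans_eq ?_
    simp only [c, D, hnorm]
    field_simp
    ring
  have hsum : ∑ ℓ ∈ Ico k n, (∏ j ∈ Icc k ℓ, c j) * ((ℓ - 1) / D)
      ≤ (1 + 2 * α) ^ 2 / ((2 * α - 1) * α * γ * ε) * r := by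
    simp_rw [← mul_div_assoc, ← sum_div]
    rw [div_le_iff₀ hD]
    refine (sum_prod_mul_sub_one_le hα hk hn fun ℓ hℓ => hprod k ℓ hk hℓ).trans_eq ?_
    simp only [D, r]
    field_simp
  have htail : (∏ j ∈ Ico k n, c j) * H n ≤ r * (2 * η * M) := by
    have hprod_n := hprod k (n - 1) hk (by omega)
    rw [← Ico_add_one_right_eq_Icc, Nat.sub_add_cancel (by omega), Nat.cast_pred (by omega)]
      at hprod_n
    have hHn' : H n ≤ 2 * η * M :=
      hHn.trans ((mul_div_sub_one_le_two_mul (by positivity) hn').trans_eq (by ring))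
    calc (∏ j ∈ Ico k n, c j) * H n ≤ (∏ j ∈ Ico k n, c j) * (2 * η * M) := by gcongr
      _ ≤ r * (2 * η * M) := by gcongr
  linarith

theorem stmt_16 (α ε γ η M : ℝ) (hα : 1 / 2 < α) (hε : 0 < ε) (hγ : 0 < γ)
    (hη : 0 < η) (hM : 0 < M) (hnorm : α = η * γ * (1 + ε))
    (n : ℕ) (hn : 2 ≤ n) (H : ℕ → ℝ)
    (hHnonneg : ∀ k, 1 ≤ k → k ≤ n → 0 ≤ H k)
    (hrec : ∀ k, 1 ≤ k → k < n →
      H k ≤ (η * (1 + 1 / ε) * (k : ℝ) * ((k : ℝ) - 1) / ((n : ℝ) - 1) ^ 2)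
              / (1 + α * (k : ℝ))
            + (α * (k : ℝ) / (1 + α * (k : ℝ))) * H (k + 1))
    (hHn : H n ≤ η * M * (n : ℝ) / ((n : ℝ) - 1))
    (hprod : ∀ k ℓ : ℕ, 1 ≤ k → k ≤ ℓ →
      ∏ j ∈ Finset.Icc k ℓ, (α * (j : ℝ) / (1 + α * (j : ℝ)))
        ≤ ((1 + α * (k : ℝ)) / (1 + α * (ℓ : ℝ))) ^ (1 / α)) :
    ∀ k, 1 ≤ k → k < n →
      H k ≤ ((1 + 2 * α) ^ 2 / ((2 * α - 1) * α * γ * ε) + 2 * η * M)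
        * ((1 + α * (k : ℝ)) / (1 + α * ((n : ℝ) - 1))) ^ (1 / α) :=
  stmt_16_general α ε γ η M hα hε hγ hη hM hnorm n hn H hrec hHn hprod
end
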